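/- Let u ∈ ℝ^{n+1} be a unit vector with all entries nonzero, let x₀ > 0, and let y : ℝ → ℝ be a function such that Φ_u(x, y(x)) = 0 for all x in some neighborhood of x₀ contained in (0, ∞), and such that y has derivative d at x₀. Then d ≤ (−y(x₀) + x₀² + y(x₀)²)/x₀. -/

import Mathlib

/-- The continuous inverse cotangent with range `(0, π)`. -/
noncomputable def arccot (θ : ℝ) : ℝ := Real.pi / 2 - Real.arctan θ

/-- The lifting `Φ_u(x, y)` of the argument of `F_u(x + iy)` (for `x > 0`). -/
noncomputable def Phi {m : ℕ} (u : Fin m → ℝ) (x y : ℝ) : ℝ :=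
  x * ∑ j, u j
    - ∑ j ∈ Finset.univ.filter (fun j => 0 < u j), arccot ((1 / u j - y) / x)
    + ∑ j ∈ Finset.univ.filter (fun j => u j < 0), arccot (-(1 / u j - y) / x)

/-!
Along the curve `Φ_u(x, y(x)) = 0` the total derivative of `Φ_u` vanishes. With
`a_j = 1/u_j - y(x₀)` and `q_j = x₀² + a_j²` this reads `∑ (u_j q_j - a_j - d x₀) / q_j = 0`,
and `u_j q_j - a_j = u_j (x₀² + y(x₀)²) - y(x₀)`. Since a unit vector has `u_j ≤ 1`, every numerator
is at most `x₀² + y(x₀)² - y(x₀) - d x₀`, which therefore cannot be negative.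
-/

open Finset

lemma arccot_neg (θ : ℝ) : arccot (-θ) = Real.pi - arccot θ := by
  simp only [arccot, Real.arctan_neg]
  ring

lemma hasDerivAt_arccot (θ : ℝ) : HasDerivAt arccot (-(1 / (1 + θ ^ 2))) θ :=
  (Real.hasDerivAt_arctan θ).const_sub (Real.pi / 2)

lemma HasDerivAt.arccot_sub_div {y : ℝ → ℝ} {d x₀ : ℝ} (c : ℝ) (hd : HasDerivAt y d x₀)
    (hx₀ : x₀ ≠ 0) :
    HasDerivAt (fun x => arccot ((c - y x) / x))
      ((d * x₀ + (c - y x₀)) / (x₀ ^ 2 + (c - y x₀) ^ 2)) x₀ := by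
  have hinner : HasDerivAt (fun x => (c - y x) / x) (((0 - d) * x₀ - (c - y x₀) * 1) / x₀ ^ 2) x₀ :=
    ((hasDerivAt_const x₀ c).sub hd).div (hasDerivAt_id x₀) hx₀
  refine ((hasDerivAt_arccot _).comp x₀ hinner).congr_deriv ?_
  have hq : x₀ ^ 2 + (c - y x₀) ^ 2 ≠ 0 := by positivity
  field_simp
  ring

lemma Phi_eq_of_ne_zero {m : ℕ} {u : Fin m → ℝ} (hnz : ∀ j, u j ≠ 0) (x y : ℝ) :
    Phi u x y = x * ∑ j, u j - ∑ j, arccot ((1 / u j - y) / x)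
      + Real.pi * #{j | u j < 0} := by
  have hneg : (univ.filter fun j => ¬ 0 < u j) = univ.filter fun j => u j < 0 :=
    filter_congr fun j _ => not_lt.trans (hnz j).le_iff_lt
  have hsplit := sum_filter_add_sum_filter_not univ (fun j => 0 < u j)
    fun j => arccot ((1 / u j - y) / x)
  rw [hneg] at hsplit
  rw [Phi, ← hsplit]
  simp only [neg_div, arccot_neg, sum_sub_distrib, sum_const, nsmul_eq_mul]
  ring

lemma hasDerivAt_Phi_comp {m : ℕ} {u : Fin m → ℝ} (hnz : ∀ j, u j ≠ 0) {y : ℝ → ℝ}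
    {d x₀ : ℝ} (hd : HasDerivAt y d x₀) (hx₀ : x₀ ≠ 0) :
    HasDerivAt (fun x => Phi u x (y x))
      (∑ j, u j - ∑ j, (d * x₀ + (1 / u j - y x₀)) / (x₀ ^ 2 + (1 / u j - y x₀) ^ 2)) x₀ := by
  simp only [Phi_eq_of_ne_zero hnz]
  have hlin : HasDerivAt (fun x : ℝ => x * ∑ j, u j) (∑ j, u j) x₀ := by
    simpa using (hasDerivAt_id x₀).mul_const (∑ j, u j)
  have harccot := HasDerivAt.fun_sum fun j (_ : j ∈ univ) => hd.arccot_sub_div (1 / u j) hx₀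
  simpa using (hlin.sub harccot).add_const (Real.pi * #{j | u j < 0})

lemma le_one_of_sum_sq_eq_one {ι : Type*} [Fintype ι] {u : ι → ℝ} (hu : ∑ j, u j ^ 2 = 1)
    (j : ι) : u j ≤ 1 := by
  have hj : u j ^ 2 ≤ 1 := hu ▸ single_le_sum (fun i _ => sq_nonneg (u i)) (mem_univ j)
  nlinarith [sq_nonneg (u j - 1)]

lemma mul_sq_add_sq_inv_sub (u x Y : ℝ) (hu : u ≠ 0) :
    u * (x ^ 2 + (1 / u - Y) ^ 2) - (1 / u - Y) = u * (x ^ 2 + Y ^ 2) - Y := by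
  field_simp
  ring

lemma mul_le_of_sum_eq_sum_div {ι : Type*} [Fintype ι] [Nonempty ι] {u : ι → ℝ}
    (hnz : ∀ j, u j ≠ 0) (hu1 : ∀ j, u j ≤ 1) {x Y d : ℝ} (hx : x ≠ 0)
    (h : ∑ j, u j = ∑ j, (d * x + (1 / u j - Y)) / (x ^ 2 + (1 / u j - Y) ^ 2)) :
    d * x ≤ x ^ 2 + Y ^ 2 - Y := by
  by_contra! hlt
  set q : ι → ℝ := fun j => x ^ 2 + (1 / u j - Y) ^ 2
  have hq : ∀ j, 0 < q j := fun j => by positivity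
  have hterm : ∀ j, u j - (d * x + (1 / u j - Y)) / q j < 0 := by
    intro j
    have hnum : u j * q j - (1 / u j - Y) - d * x < 0 := by
      rw [mul_sq_add_sq_inv_sub _ _ _ (hnz j)]
      linarith [mul_nonneg (sub_nonneg.2 (hu1 j)) (add_nonneg (sq_nonneg x) (sq_nonneg Y))]
    rw [sub_div' (hq j).ne']
    exact div_neg_of_neg_of_pos (by linarith) (hq j)
  have hsum := sum_neg (fun j (_ : j ∈ univ) => hterm j) univ_nonempty
  rw [sum_sub_distrib, h] at hsum
  exact lt_irrefl _ (sub_neg.mp hsum)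

theorem stmt17 (n : ℕ) (u : Fin (n + 1) → ℝ) (hu : ∑ j, (u j) ^ 2 = 1)
    (hnz : ∀ j, u j ≠ 0) (x₀ : ℝ) (hx₀ : 0 < x₀) (y : ℝ → ℝ) (d : ℝ)
    (hnbhd : ∃ s ∈ nhds x₀, s ⊆ Set.Ioi (0 : ℝ) ∧ ∀ x ∈ s, Phi u x (y x) = 0)
    (hd : HasDerivAt y d x₀) :
    d ≤ (-(y x₀) + x₀ ^ 2 + (y x₀) ^ 2) / x₀ := by
  obtain ⟨s, hs, -, hzero⟩ := hnbhd
  have hconst : (fun x => Phi u x (y x)) =ᶠ[nhds x₀] fun _ => (0 : ℝ) :=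
    Filter.eventually_of_mem hs hzero
  have hcrit := (hasDerivAt_Phi_comp hnz hd hx₀.ne').unique
    ((hasDerivAt_const x₀ (0 : ℝ)).congr_of_eventuallyEq hconst)
  have hdx := mul_le_of_sum_eq_sum_div hnz (le_one_of_sum_sq_eq_one hu) hx₀.ne' (sub_eq_zero.mp hcrit)
  rw [le_div_iff₀ hx₀]
  linarith
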